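/- In Kleene's first model K_1, there is a hereditarily total pair f ≠ g of elements such that f ≁_α g for every ordinal α. Specifically, there exist f ≠ g in ω with f·x = f and g·x = g for all x. -/

import Mathlib

/-- A partial applicative structure: a set with a partial binary application. -/
structure PAS where
  carrier : Type
  app : carrier → carrier → Part carrier

namespace PAS

/-- Closed terms over a partial applicative structure. -/
inductive Term (A : PAS) : Type
  | const : A.carrier → Term A
  | app : Term A → Term A → Term A

/-- Evaluation of a closed term (a partial element of the carrier). -/
def Term.eval {A : PAS} : Term A → Part A.carrier
  | .const a => Part.some a
  | .app s t => do
      let x ← Term.eval s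
      let y ← Term.eval t
      A.app x y

/-- Kleene equality of closed terms: both undefined, or both defined and equal. -/
def KEq {A : PAS} (s t : Term A) : Prop := s.eval = t.eval

/-- The transfinite hierarchy of extensionality relations `∼_α` on closed terms:
`s ∼_0 t` iff `s ≃ t`; `s ∼_{α+1} t` iff `∀ x, s·x ∼_α t·x`; and at limits,
`s ∼_α t` iff `s ∼_β t` for some `β < α`. -/
noncomputable def sim (A : PAS) (α : Ordinal) : Term A → Term A → Prop :=
  Ordinal.limitRecOn α
    (fun s t => KEq s t)
    (fun _ ih s t => ∀ x : A.carrier, ih (s.app (.const x)) (t.app (.const x)))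
    (fun β _ ih s t => ∃ γ, ∃ h : γ < β, ih γ h s t)

end PAS

/-- A partial combinatory algebra: a partial applicative structure with
combinators `K` and `S` such that `K·a·b = a`, `S·a·b` is defined, and
`S·a·b·c ≃ a·c·(b·c)`. -/
structure PCA extends PAS where
  K : carrier
  S : carrier
  K_spec : ∀ a b : carrier, (app K a).bind (fun x => app x b) = Part.some a
  S_defined : ∀ a b : carrier, ((app S a).bind (fun x => app x b)).Dom
  S_spec : ∀ a b c : carrier,
    ((app S a).bind (fun x => app x b)).bind (fun x => app x c)
      = (app a c).bind (fun u => (app b c).bind (fun v => app u v))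

/-- Kleene's first model: the pca on ω with application n·m = Φ_n(m). -/
def K1 : PAS :=
  ⟨ℕ, fun n m => (Denumerable.ofNat Nat.Partrec.Code n).eval m⟩

/-- Iterated application of a term to a finite list of elements: t·σ(0)·…·σ(k-1). -/
def PAS.Term.appList {A : PAS} (t : PAS.Term A) (σ : List A.carrier) : PAS.Term A :=
  σ.foldl (fun s x => s.app (.const x)) t

/-- An element is hereditarily total if every iterated application to elements is defined. -/
def PAS.HeredTotal (A : PAS) (a : A.carrier) : Prop :=
  ∀ σ : List A.carrier, ((PAS.Term.const a).appList σ).eval.Dom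

/-!
By the recursion theorem there is an index `f` with `Φ_f(x) = f` for all `x`. Applying it
once more, to `c ↦ if c = f then f + 1 else c`, gives a second such index `g`; it differs
from `f`, because `Φ_f` is constantly `f` and not `f + 1`. An element `a` with `a·x = a` for
all `x` absorbs every application, so it is hereditarily total, and in every unfolding of
`f ∼_α g` the two sides still evaluate to `f` and `g`; hence `f ≁_α g` by induction on `α`.
-/

namespace PAS

def IsLeftZero (A : PAS) (a : A.carrier) : Prop :=
  ∀ x : A.carrier, A.app a x = Part.some a

variable {A : PAS}

theorem sim_zero (s t : Term A) : A.sim 0 s t ↔ KEq s t := by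
  unfold sim
  rw [Ordinal.limitRecOn_zero]

theorem sim_add_one (β : Ordinal) (s t : Term A) :
    A.sim (β + 1) s t ↔ ∀ x : A.carrier, A.sim β (s.app (.const x)) (t.app (.const x)) := by
  unfold sim
  rw [Ordinal.limitRecOn_add_one]

theorem sim_of_isSuccLimit {β : Ordinal} (hβ : Order.IsSuccLimit β) (s t : Term A) :
    A.sim β s t ↔ ∃ γ < β, A.sim γ s t := by
  unfold sim
  rw [Ordinal.limitRecOn_limit _ _ _ _ hβ]
  simp only [exists_prop]

theorem Term.eval_app_const_of_isLeftZero {a : A.carrier} (ha : A.IsLeftZero a) {s : Term A}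
    (hs : s.eval = Part.some a) (x : A.carrier) : (s.app (.const x)).eval = Part.some a := by
  simp only [Term.eval, hs, Part.bind_eq_bind, Part.bind_some]
  exact ha x

theorem Term.eval_appList_of_isLeftZero {a : A.carrier} (ha : A.IsLeftZero a)
    (σ : List A.carrier) :
    ∀ {s : Term A}, s.eval = Part.some a → (s.appList σ).eval = Part.some a := by
  induction σ with
  | nil => exact id
  | cons x σ ih => exact fun hs => ih (eval_app_const_of_isLeftZero ha hs x)

theorem heredTotal_of_isLeftZero {a : A.carrier} (ha : A.IsLeftZero a) : A.HeredTotal a := by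
  intro σ
  rw [Term.eval_appList_of_isLeftZero ha σ rfl]
  trivial

theorem not_sim_of_isLeftZero {a b : A.carrier} (hab : a ≠ b) (ha : A.IsLeftZero a)
    (hb : A.IsLeftZero b) (α : Ordinal) :
    ∀ {s t : Term A}, s.eval = Part.some a → t.eval = Part.some b → ¬ A.sim α s t := by
  induction α using Ordinal.limitRecOn with
  | zero =>
    intro s t hs ht h
    rw [sim_zero, KEq, hs, ht] at h
    exact hab (Part.some_injective h)
  | add_one β ih =>
    intro s t hs ht h
    rw [sim_add_one] at h
    exact ih (Term.eval_app_const_of_isLeftZero ha hs _)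
      (Term.eval_app_const_of_isLeftZero hb ht _) (h a)
  | limit β hβ ih =>
    intro s t hs ht h
    obtain ⟨γ, hγ, h⟩ := (sim_of_isSuccLimit hβ s t).1 h
    exact ih γ hγ hs ht h

end PAS

section KleeneFirstModel

open Nat.Partrec (Code)

theorem K1_isLeftZero_encode_iff (c : Code) :
    K1.IsLeftZero (Encodable.encode c) ↔ c.eval = fun _ => Part.some (Encodable.encode c) := by
  unfold PAS.IsLeftZero K1
  simp only [Denumerable.ofNat_encode]
  exact funext_iff.symm

theorem exists_code_eval_eq_const {h : Code → ℕ} (hh : Computable h) :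
    ∃ c : Code, c.eval = fun _ => Part.some (h c) :=
  Code.fixed_point₂ (Computable₂.partrec₂ (hh.comp Computable.fst))

theorem exists_isLeftZero_K1 : ∃ f : ℕ, K1.IsLeftZero f := by
  obtain ⟨c, hc⟩ := exists_code_eval_eq_const Computable.encode
  exact ⟨Encodable.encode c, (K1_isLeftZero_encode_iff c).2 hc⟩

theorem exists_isLeftZero_K1_ne {m : ℕ} (hm : K1.IsLeftZero m) :
    ∃ g : ℕ, g ≠ m ∧ K1.IsLeftZero g := by
  have hh :
      Computable fun c : Code => if Encodable.encode c = m then m + 1 else Encodable.encode c :=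
    (Primrec.ite (Primrec.eq.comp Primrec.id (Primrec.const m)) (Primrec.const (m + 1))
      Primrec.id).to_comp.comp Computable.encode
  obtain ⟨c, hc⟩ := exists_code_eval_eq_const hh
  have hne : Encodable.encode c ≠ m := by
    intro hcm
    rw [← hcm, K1_isLeftZero_encode_iff, hc, if_pos hcm] at hm
    have h0 : m + 1 = Encodable.encode c := Part.some_injective (congrFun hm 0)
    omega
  refine ⟨Encodable.encode c, hne, (K1_isLeftZero_encode_iff c).2 ?_⟩
  rw [hc, if_neg hne]

end KleeneFirstModel

/-- In Kleene's first model there are hereditarily total f ≠ g with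
f·x = f and g·x = g for all x, hence f ≁_α g for every ordinal α. -/
theorem stmt8 :
    ∃ f g : ℕ, f ≠ g ∧
      (∀ x : ℕ, K1.app f x = Part.some f) ∧
      (∀ x : ℕ, K1.app g x = Part.some g) ∧
      K1.HeredTotal f ∧ K1.HeredTotal g ∧
      ∀ α : Ordinal, ¬ K1.sim α (.const f) (.const g) := by
  obtain ⟨f, hf⟩ := exists_isLeftZero_K1
  obtain ⟨g, hgf, hg⟩ := exists_isLeftZero_K1_ne hf
  exact ⟨f, g, hgf.symm, hf, hg, PAS.heredTotal_of_isLeftZero hf, PAS.heredTotal_of_isLeftZero hg,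
    fun α => PAS.not_sim_of_isLeftZero hgf.symm hf hg α rfl rfl⟩
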